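/- Let A be a nonnegative selfadjoint operator on a complex Hilbert space X with 0 ∈ σ(A) but 0 not an eigenvalue. For α > 0, the range R(A^α) equipped with the inner product ⟨x,y⟩_{R(A^α)} = ⟨x,y⟩_X + ∫₀^∞ t^{2α-1} ⟨e^{-tA}x, e^{-tA}y⟩_X dt is a Hilbert space (i.e., it is complete). -/

import Mathlib

/-!
By the spectral theorem, every nonnegative selfadjoint operator `A` on a complex
Hilbert space `X` (with trivial kernel) is unitarily equivalent to multiplication by a
measurable function `a ≥ 0` (with `a > 0` a.e.) on some `L²(μ)`.  We formalize the
statement in this spectral model: `X = L²(μ)`, `(e^{-tA}x)(i) = exp(-t·a i)·x i`,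
`(A^α y)(i) = (a i)^α·y i`, and `x ∈ R(A^α)` iff `x = A^α y` for some `y ∈ L²(μ)`.

By Tonelli and the Gamma integral, `x = A^α y` gives
`∫₀^∞ t^{2α-1} ‖e^{-tA}x‖² dt = 2^{-2α} Γ(2α) ‖y‖²`, so the squared norm of `R(A^α)` is
`‖x‖² + C‖y‖²` with `C > 0`. A Cauchy sequence `uₙ = A^α yₙ` of `R(A^α)` therefore has both
`(uₙ)` and `(yₙ)` Cauchy in `L²`, with limits `v` and `z`. Along a common subsequence both
converge almost everywhere, so `v = A^α z ∈ R(A^α)`, and `uₙ → v` in `R(A^α)`.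
-/

open MeasureTheory Filter
open scoped ENNReal NNReal Topology

/-- `‖e^{-tA} x‖²` in the spectral model. -/
noncomputable def heatNormSq {ι : Type*} [MeasurableSpace ι] (μ : Measure ι)
    (a : ι → ℝ) (x : ι → ℂ) (t : ℝ) : ℝ≥0∞ :=
  ∫⁻ i, (‖x i‖₊ : ℝ≥0∞) ^ 2 * ENNReal.ofReal (Real.exp (-(2 * t * a i))) ∂μ

/-- `∫₀^∞ t^{2α-1} ‖e^{-tA} x‖² dt` in the spectral model; this is the square of the
norm `|||x|||_{R(A^α)}`. -/
noncomputable def rangeIntegral {ι : Type*} [MeasurableSpace ι] (μ : Measure ι)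
    (a : ι → ℝ) (α : ℝ) (x : ι → ℂ) : ℝ≥0∞ :=
  ∫⁻ t in Set.Ioi (0 : ℝ), ENNReal.ofReal (t ^ (2 * α - 1)) * heatNormSq μ a x t

namespace ENNReal

variable {β : Type*} {l : Filter β}

theorem tendsto_pow_nhds_zero_iff {f : β → ℝ≥0∞} {n : ℕ} (hn : n ≠ 0) :
    Tendsto (fun x => f x ^ n) l (𝓝 0) ↔ Tendsto f l (𝓝 0) := by
  refine ⟨fun h => ?_, fun h => by simpa [hn] using ENNReal.Tendsto.pow (n := n) h⟩
  have := (ENNReal.continuous_rpow_const (y := (n : ℝ)⁻¹)).tendsto 0 |>.comp h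
  rw [ENNReal.zero_rpow_of_pos (by positivity)] at this
  simpa [Function.comp_def, ← ENNReal.rpow_natCast, ← ENNReal.rpow_mul, hn] using this

theorem tendsto_sq_add_const_mul_sq_nhds_zero_iff {f g : β → ℝ≥0∞} {c : ℝ≥0∞}
    (hc₀ : c ≠ 0) (hc : c ≠ ∞) :
    Tendsto (fun x => f x ^ 2 + c * g x ^ 2) l (𝓝 0)
      ↔ Tendsto f l (𝓝 0) ∧ Tendsto g l (𝓝 0) := by
  simp_rw [← tendsto_pow_nhds_zero_iff (f := f) two_ne_zero,
    ← tendsto_pow_nhds_zero_iff (f := g) two_ne_zero]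
  refine ⟨fun h => ⟨?_, ?_⟩, fun ⟨hf, hg⟩ => by
    simpa using hf.add (ENNReal.Tendsto.const_mul hg (.inr hc))⟩
  · exact tendsto_of_tendsto_of_tendsto_of_le_of_le tendsto_const_nhds h
      (fun _ => zero_le) fun _ => le_self_add
  · have hcg : Tendsto (fun x => c * g x ^ 2) l (𝓝 0) :=
      tendsto_of_tendsto_of_tendsto_of_le_of_le tendsto_const_nhds h
        (fun _ => zero_le) fun _ => le_add_self
    simpa [ENNReal.inv_mul_cancel_left hc₀ hc] using ENNReal.Tendsto.const_mul hcg (.inr (inv_ne_top.2 hc₀))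

theorem tendsto_atTop_prod_self_nhds_zero_of_lt_ofReal [Nonempty β] [Preorder β] [IsDirectedOrder β]
    {f : β → β → ℝ≥0∞}
    (h : ∀ ε > (0 : ℝ), ∃ N, ∀ m ≥ N, ∀ n ≥ N, f m n < ENNReal.ofReal ε) :
    Tendsto (fun n : β × β => f n.1 n.2) atTop (𝓝 0) := by
  refine ENNReal.tendsto_nhds_zero.2 fun ε hε => ?_
  obtain ⟨δ, -, hδ, hδε⟩ := ENNReal.lt_iff_exists_real_btwn.1 hε
  obtain ⟨N, hN⟩ := h δ (ENNReal.ofReal_pos.1 hδ)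
  exact eventually_atTop_prod_self.2 ⟨N, fun m n hm hn => ((hN m hm n hn).trans hδε).le⟩

end ENNReal

section LpLimits

variable {α E F : Type*} [MeasurableSpace α] {μ : Measure α}
  [NormedAddCommGroup E] [NormedAddCommGroup F]

theorem eLpNorm_two_sq (f : α → E) : eLpNorm f 2 μ ^ 2 = ∫⁻ x, ‖f x‖ₑ ^ 2 ∂μ := by
  simpa using eLpNorm_nnreal_pow_eq_lintegral (μ := μ) (f := f) (p := 2) two_ne_zero

theorem exists_memLp_tendsto_eLpNorm_of_cauchy {p : ℝ≥0∞} [Fact (1 ≤ p)] [CompleteSpace E]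
    {f : ℕ → α → E} (hf : ∀ n, MemLp (f n) p μ)
    (hcau : Tendsto (fun n : ℕ × ℕ => eLpNorm (f n.1 - f n.2) p μ) atTop (𝓝 0)) :
    ∃ g, MemLp g p μ ∧ Tendsto (fun n => eLpNorm (f n - g) p μ) atTop (𝓝 0) := by
  have hF : CauchySeq fun n => (hf n).toLp (f n) := by
    rw [Lp.cauchySeq_Lp_iff_cauchySeq_eLpNorm]
    refine hcau.congr fun n => eLpNorm_congr_ae ?_
    filter_upwards [(hf n.1).coeFn_toLp, (hf n.2).coeFn_toLp] with i h1 h2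
    simp [h1, h2]
  obtain ⟨G, hG⟩ := cauchySeq_tendsto_of_complete hF
  rw [← Lp.toLp_coeFn G (Lp.memLp G), Lp.tendsto_Lp_iff_tendsto_eLpNorm''] at hG
  exact ⟨G, Lp.memLp G, hG⟩

theorem ae_eq_comp_of_tendsto_eLpNorm {p q : ℝ≥0∞} (hp : p ≠ 0) (hq : q ≠ 0)
    {u : ℕ → α → F} {y : ℕ → α → E} {v : α → F} {z : α → E} {Φ : α → E → F}
    (hΦ : ∀ i, Continuous (Φ i))
    (hu : ∀ n, AEStronglyMeasurable (u n) μ) (hv : AEStronglyMeasurable v μ)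
    (hy : ∀ n, AEStronglyMeasurable (y n) μ) (hz : AEStronglyMeasurable z μ)
    (huy : ∀ n, u n =ᵐ[μ] fun i => Φ i (y n i))
    (huv : Tendsto (fun n => eLpNorm (u n - v) p μ) atTop (𝓝 0))
    (hyz : Tendsto (fun n => eLpNorm (y n - z) q μ) atTop (𝓝 0)) :
    v =ᵐ[μ] fun i => Φ i (z i) := by
  obtain ⟨ns, hns, hu_ae⟩ :=
    (tendstoInMeasure_of_tendsto_eLpNorm hp hu hv huv).exists_seq_tendsto_ae
  obtain ⟨ms, hms, hy_ae⟩ := (tendstoInMeasure_of_tendsto_eLpNorm hq (fun n => hy (ns n)) hz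
    (hyz.comp hns.tendsto_atTop)).exists_seq_tendsto_ae
  filter_upwards [hu_ae, hy_ae, ae_all_iff.2 huy] with i hui hyi huyi
  refine tendsto_nhds_unique (hui.comp hms.tendsto_atTop) ?_
  exact (((hΦ i).tendsto _).comp hyi).congr fun k => (huyi _).symm

end LpLimits

theorem lintegral_rpow_mul_exp_neg_mul_Ioi {s r : ℝ} (hs : 0 < s) (hr : 0 < r) :
    ∫⁻ t in Set.Ioi (0 : ℝ), ENNReal.ofReal (t ^ (s - 1)) * ENNReal.ofReal (Real.exp (-(r * t)))
      = ENNReal.ofReal ((1 / r) ^ s * Real.Gamma s) := by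
  have hint : IntegrableOn (fun t : ℝ => t ^ (s - 1) * Real.exp (-(r * t))) (Set.Ioi 0) := by
    simpa using integrableOn_rpow_mul_exp_neg_mul_rpow (p := 1) (by linarith) one_pos hr
  rw [← Real.integral_rpow_mul_exp_neg_mul_Ioi hs hr,
    ofReal_integral_eq_lintegral_ofReal hint (ae_restrict_of_forall_mem measurableSet_Ioi
      fun t (ht : 0 < t) => by positivity)]
  refine setLIntegral_congr_fun measurableSet_Ioi fun t (ht : 0 < t) => ?_
  rw [ENNReal.ofReal_mul (by positivity)]

/-- `∫₀^∞ t^{2α-1} e^{-2t} dt`. -/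
noncomputable def rangeConst (α : ℝ) : ℝ := 2 ^ (-(2 * α)) * Real.Gamma (2 * α)

theorem rangeConst_pos {α : ℝ} (hα : 0 < α) : 0 < rangeConst α := by
  have := Real.Gamma_pos_of_pos (by linarith : 0 < 2 * α)
  unfold rangeConst; positivity

theorem lintegral_rpow_mul_exp_neg_two_mul {α b : ℝ} (hα : 0 < α) (hb : 0 < b) :
    ∫⁻ t in Set.Ioi (0 : ℝ), ENNReal.ofReal (t ^ (2 * α - 1))
        * ENNReal.ofReal (Real.exp (-(2 * t * b)))
      = ENNReal.ofReal (rangeConst α * b ^ (-(2 * α))) := by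
  simp_rw [show ∀ t : ℝ, 2 * t * b = 2 * b * t from fun t => by ring]
  rw [lintegral_rpow_mul_exp_neg_mul_Ioi (by positivity) (by positivity), one_div,
    Real.inv_rpow (by positivity), ← Real.rpow_neg (by positivity),
    Real.mul_rpow zero_le_two hb.le, rangeConst]
  ring_nf

theorem enorm_rpow_mul_sq_mul {b : ℝ} (hb : 0 < b) (α c : ℝ) (w : ℂ) :
    ‖((b ^ α : ℝ) : ℂ) * w‖ₑ ^ 2 * ENNReal.ofReal (c * b ^ (-(2 * α)))
      = ENNReal.ofReal c * ‖w‖ₑ ^ 2 := by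
  have hcancel : ENNReal.ofReal (b ^ α) ^ 2 * ENNReal.ofReal (b ^ (-(2 * α))) = 1 := by
    rw [← ENNReal.ofReal_pow (by positivity), ← ENNReal.ofReal_mul (by positivity),
      ← Real.rpow_natCast, ← Real.rpow_mul hb.le, ← Real.rpow_add hb]
    rw [show α * (2 : ℕ) + -(2 * α) = 0 by push_cast; ring, Real.rpow_zero, ENNReal.ofReal_one]
  rw [enorm_mul, ← ofReal_norm, Complex.norm_real, Real.norm_of_nonneg (by positivity),
    ENNReal.ofReal_mul' (by positivity)]
  calc (ENNReal.ofReal (b ^ α) * ‖w‖ₑ) ^ 2 * (ENNReal.ofReal c * ENNReal.ofReal (b ^ (-(2 * α))))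
      = ENNReal.ofReal c * ‖w‖ₑ ^ 2
        * (ENNReal.ofReal (b ^ α) ^ 2 * ENNReal.ofReal (b ^ (-(2 * α)))) := by ring
    _ = ENNReal.ofReal c * ‖w‖ₑ ^ 2 := by rw [hcancel, mul_one]

section SpectralModel

variable {ι : Type*} [MeasurableSpace ι] {μ : Measure ι} {a : ι → ℝ}

theorem heatNormSq_eq_lintegral_withDensity (ha : Measurable a) {x : ι → ℂ}
    (hx : AEMeasurable x μ) (t : ℝ) :
    heatNormSq μ a x t = ∫⁻ i, ENNReal.ofReal (Real.exp (-(2 * t * a i)))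
      ∂μ.withDensity fun i => ‖x i‖ₑ ^ 2 :=
  (lintegral_withDensity_eq_lintegral_mul₀ (hx.enorm.pow_const 2)
    (by fun_prop : Measurable fun i => ENNReal.ofReal (Real.exp (-(2 * t * a i)))).aemeasurable).symm

theorem rangeIntegral_eq_lintegral_withDensity (ha : Measurable a) (ha0 : ∀ i, 0 ≤ a i)
    (hker : ∀ᵐ i ∂μ, a i ≠ 0) {α : ℝ} (hα : 0 < α) {x : ι → ℂ} (hx : MemLp x 2 μ) :
    rangeIntegral μ a α x = ∫⁻ i, ENNReal.ofReal (rangeConst α * a i ^ (-(2 * α)))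
      ∂μ.withDensity fun i => ‖x i‖ₑ ^ 2 := by
  set ν := μ.withDensity fun i => ‖x i‖ₑ ^ 2
  -- Tonelli needs an s-finite measure: `ν` is finite, whereas `μ` need not be s-finite.
  have : IsFiniteMeasure ν := isFiniteMeasure_withDensity <| by
    rw [← eLpNorm_two_sq]; exact ENNReal.pow_ne_top hx.eLpNorm_ne_top
  have hmeas : Measurable (Function.uncurry fun (t : ℝ) (i : ι) =>
      ENNReal.ofReal (t ^ (2 * α - 1)) * ENNReal.ofReal (Real.exp (-(2 * t * a i)))) := by
    unfold Function.uncurry; fun_prop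
  calc rangeIntegral μ a α x
      = ∫⁻ t in Set.Ioi (0 : ℝ), (∫⁻ i, ENNReal.ofReal (t ^ (2 * α - 1))
          * ENNReal.ofReal (Real.exp (-(2 * t * a i))) ∂ν) := by
        refine lintegral_congr fun t => ?_
        rw [heatNormSq_eq_lintegral_withDensity ha hx.aestronglyMeasurable.aemeasurable,
          lintegral_const_mul' _ _ ENNReal.ofReal_ne_top]
    _ = ∫⁻ i, (∫⁻ t in Set.Ioi (0 : ℝ), ENNReal.ofReal (t ^ (2 * α - 1))
          * ENNReal.ofReal (Real.exp (-(2 * t * a i)))) ∂ν :=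
        lintegral_lintegral_swap hmeas.aemeasurable
    _ = _ := by
        refine lintegral_congr_ae ?_
        filter_upwards [(withDensity_absolutelyContinuous μ _).ae_le hker] with i hi
        exact lintegral_rpow_mul_exp_neg_two_mul hα ((ha0 i).lt_of_ne' hi)

theorem rangeIntegral_eq_of_ae_eq_mul (ha : Measurable a) (ha0 : ∀ i, 0 ≤ a i)
    (hker : ∀ᵐ i ∂μ, a i ≠ 0) {α : ℝ} (hα : 0 < α) {x y : ι → ℂ} (hx : MemLp x 2 μ)
    (hxy : x =ᵐ[μ] fun i => ((a i ^ α : ℝ) : ℂ) * y i) :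
    rangeIntegral μ a α x = ENNReal.ofReal (rangeConst α) * eLpNorm y 2 μ ^ 2 := by
  rw [rangeIntegral_eq_lintegral_withDensity ha ha0 hker hα hx,
    lintegral_withDensity_eq_lintegral_mul₀
      (hx.aestronglyMeasurable.aemeasurable.enorm.pow_const 2)
      (by fun_prop : Measurable fun i =>
        ENNReal.ofReal (rangeConst α * a i ^ (-(2 * α)))).aemeasurable,
    eLpNorm_two_sq, ← lintegral_const_mul' _ _ ENNReal.ofReal_ne_top]
  refine lintegral_congr_ae ?_
  filter_upwards [hxy, hker] with i hxi hi
  simp only [Pi.mul_apply, hxi]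
  exact enorm_rpow_mul_sq_mul ((ha0 i).lt_of_ne' hi) α _ _

end SpectralModel

theorem stmt1_general {ι : Type*} [MeasurableSpace ι] (μ : Measure ι)
    (a : ι → ℝ) (hameas : Measurable a) (ha0 : ∀ i, 0 ≤ a i)
    (hker : ∀ᵐ i ∂μ, a i ≠ 0)
    (α : ℝ) (hα : 0 < α) (u : ℕ → ι → ℂ)
    (hmem : ∀ n, MemLp (u n) 2 μ ∧
      ∃ y : ι → ℂ, MemLp y 2 μ ∧ u n =ᵐ[μ] fun i => ((a i ^ α : ℝ) : ℂ) * y i)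
    (hcauchy : ∀ ε > (0 : ℝ), ∃ N : ℕ, ∀ m ≥ N, ∀ n ≥ N,
      (eLpNorm (fun i => u m i - u n i) 2 μ) ^ 2
        + rangeIntegral μ a α (fun i => u m i - u n i) < ENNReal.ofReal ε) :
    ∃ v : ι → ℂ,
      (MemLp v 2 μ ∧
        ∃ y : ι → ℂ, MemLp y 2 μ ∧ v =ᵐ[μ] fun i => ((a i ^ α : ℝ) : ℂ) * y i) ∧
      Tendsto (fun n => (eLpNorm (fun i => u n i - v i) 2 μ) ^ 2
        + rangeIntegral μ a α (fun i => u n i - v i)) atTop (𝓝 0) := by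
  choose hu y hy huy using hmem
  set C := ENNReal.ofReal (rangeConst α)
  have hC : C ≠ 0 := (ENNReal.ofReal_pos.2 (rangeConst_pos hα)).ne'
  have hsub : ∀ {x₁ x₂ y₁ y₂ : ι → ℂ}, x₁ =ᵐ[μ] (fun i => ((a i ^ α : ℝ) : ℂ) * y₁ i) →
      x₂ =ᵐ[μ] (fun i => ((a i ^ α : ℝ) : ℂ) * y₂ i) →
      (fun i => x₁ i - x₂ i) =ᵐ[μ] fun i => ((a i ^ α : ℝ) : ℂ) * (y₁ i - y₂ i) :=
    fun h₁ h₂ => (h₁.sub h₂).mono fun i hi => by simpa [mul_sub] using hi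
  have hcau : Tendsto (fun n : ℕ × ℕ => eLpNorm (u n.1 - u n.2) 2 μ ^ 2
      + C * eLpNorm (y n.1 - y n.2) 2 μ ^ 2) atTop (𝓝 0) :=
    (ENNReal.tendsto_atTop_prod_self_nhds_zero_of_lt_ofReal hcauchy).congr fun n => by
      rw [rangeIntegral_eq_of_ae_eq_mul (x := fun i => u n.1 i - u n.2 i) hameas ha0 hker hα
        ((hu _).sub (hu _)) (hsub (huy _) (huy _))]
      rfl
  obtain ⟨hu_cau, hy_cau⟩ :=
    (ENNReal.tendsto_sq_add_const_mul_sq_nhds_zero_iff hC ENNReal.ofReal_ne_top).1 hcau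
  obtain ⟨v, hv, huv⟩ := exists_memLp_tendsto_eLpNorm_of_cauchy hu hu_cau
  obtain ⟨z, hz, hyz⟩ := exists_memLp_tendsto_eLpNorm_of_cauchy hy hy_cau
  have hvz : v =ᵐ[μ] fun i => ((a i ^ α : ℝ) : ℂ) * z i :=
    ae_eq_comp_of_tendsto_eLpNorm two_ne_zero two_ne_zero (fun _ => continuous_const_mul _)
      (fun n => (hu n).1) hv.1 (fun n => (hy n).1) hz.1 huy huv hyz
  refine ⟨v, ⟨hv, z, hz, hvz⟩, ?_⟩
  refine ((ENNReal.tendsto_sq_add_const_mul_sq_nhds_zero_iff hC ENNReal.ofReal_ne_top).2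
    ⟨huv, hyz⟩).congr fun n => ?_
  rw [rangeIntegral_eq_of_ae_eq_mul (x := fun i => u n i - v i) hameas ha0 hker hα
    ((hu n).sub hv) (hsub (huy n) hvz)]
  rfl

/-- `R(A^α)` with the inner product
`⟨x,y⟩_{R(A^α)} = ⟨x,y⟩_X + ∫₀^∞ t^{2α-1}⟨e^{-tA}x, e^{-tA}y⟩ dt` is complete: every
Cauchy sequence (w.r.t. the induced norm, whose square is
`‖·‖²_X + rangeIntegral`) converges in `R(A^α)`. -/
theorem stmt1 {ι : Type*} [MeasurableSpace ι] (μ : Measure ι)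
    (a : ι → ℝ) (hameas : Measurable a) (ha0 : ∀ i, 0 ≤ a i)
    (hker : ∀ᵐ i ∂μ, a i ≠ 0) (hspec : ∀ ε > (0 : ℝ), μ {i | a i < ε} ≠ 0)
    (α : ℝ) (hα : 0 < α) (u : ℕ → ι → ℂ)
    (hmem : ∀ n, MemLp (u n) 2 μ ∧
      ∃ y : ι → ℂ, MemLp y 2 μ ∧ u n =ᵐ[μ] fun i => ((a i ^ α : ℝ) : ℂ) * y i)
    (hcauchy : ∀ ε > (0 : ℝ), ∃ N : ℕ, ∀ m ≥ N, ∀ n ≥ N,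
      (eLpNorm (fun i => u m i - u n i) 2 μ) ^ 2
        + rangeIntegral μ a α (fun i => u m i - u n i) < ENNReal.ofReal ε) :
    ∃ v : ι → ℂ,
      (MemLp v 2 μ ∧
        ∃ y : ι → ℂ, MemLp y 2 μ ∧ v =ᵐ[μ] fun i => ((a i ^ α : ℝ) : ℂ) * y i) ∧
      Tendsto (fun n => (eLpNorm (fun i => u n i - v i) 2 μ) ^ 2
        + rangeIntegral μ a α (fun i => u n i - v i)) atTop (𝓝 0) :=
  stmt1_general μ a hameas ha0 hker α hα u hmem hcauchy
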